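/- arXiv:2407.17130 — 5 statements merged into one kernel-verified Lean document; each statement's English description precedes it below -/
import Mathlib

section
/- Let V be a real Hilbert space, let a : V × V → ℝ be a continuous bilinear form, let T : V → V be a continuous linear bijection with continuous inverse, and let α > 0 be such that |a(v, T v)| ≥ α‖v‖² for every v ∈ V. Then for every continuous linear functional f on V there exists a unique u ∈ V such that a(u, v) = f(v) for all v ∈ V. -/
set_option maxHeartbeats 1000000

open RealInnerProductSpace

/-- Auxiliary: a coercive bilinear form solves every functional. -/
lemma tcoer_aux_exists {V : Type*} [NormedAddCommGroup V] [InnerProductSpace ℝ V]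
    [CompleteSpace V] (B : V →L[ℝ] V →L[ℝ] ℝ) (hB : IsCoercive B) (g : V →L[ℝ] ℝ) :
    ∃ u : V, ∀ w : V, B u w = g w := by
  set y : V := (InnerProductSpace.toDual ℝ V).symm g with hy
  refine ⟨hB.continuousLinearEquivOfBilin.symm y, fun w => ?_⟩
  have h1 := hB.continuousLinearEquivOfBilin_apply (hB.continuousLinearEquivOfBilin.symm y) w
  rw [hB.continuousLinearEquivOfBilin.apply_symm_apply] at h1
  rw [← h1, hy, InnerProductSpace.toDual_symm_apply]

/-- T-coercivity implies well-posedness (Banach–Nečas–Babuška): if `a` is a continuous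
bilinear form on a real Hilbert space `V`, `T : V ≃L[ℝ] V` is a continuous linear
bijection with continuous inverse, and `|a(v, T v)| ≥ α ‖v‖²` for some `α > 0`, then
for every continuous linear functional `f` there is a unique `u` with `a(u, v) = f(v)`
for all `v`. -/
theorem tcoercivity_wellposed {V : Type*} [NormedAddCommGroup V] [InnerProductSpace ℝ V]
    [CompleteSpace V] (a : V →L[ℝ] V →L[ℝ] ℝ) (T : V ≃L[ℝ] V) (α : ℝ) (hα : 0 < α)
    (hcoer : ∀ v : V, α * ‖v‖ ^ 2 ≤ |a v (T v)|) :
    ∀ f : V →L[ℝ] ℝ, ∃! u : V, ∀ v : V, a u v = f v := by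
  intro f
  set S : V → ℝ := fun v => a v (T v) with hS
  -- sign dichotomy for S
  have hdich : ∀ v : V, α * ‖v‖ ^ 2 ≤ S v ∨ S v ≤ -(α * ‖v‖ ^ 2) := by
    intro v
    rcases le_abs.mp (hcoer v) with h | h
    · left; exact h
    · right; linarith
  have hScont : Continuous S := by
    have : Continuous fun v : V => (a v) (T v) :=
      a.continuous₂.comp (continuous_id.prodMk T.continuous)
    exact this
  have hsign : (∀ v : V, α * ‖v‖ ^ 2 ≤ S v) ∨ (∀ v : V, α * ‖v‖ ^ 2 ≤ -S v) := by
    by_contra hcon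
    push_neg at hcon
    obtain ⟨⟨v, hv⟩, ⟨w, hw⟩⟩ := hcon
    -- S v < 0, S w > 0, both nonzero
    have hv0 : v ≠ 0 := by
      rintro rfl; simp [hS] at hv
    have hvneg : S v < 0 := by
      rcases hdich v with h | h
      · exact absurd h (not_le.mpr hv)
      · have : 0 < α * ‖v‖ ^ 2 := mul_pos hα (pow_pos (norm_pos_iff.mpr hv0) 2)
        linarith
    have hw0 : w ≠ 0 := by
      rintro rfl; simp [hS] at hw
    have hwpos : 0 < S w := by
      rcases hdich w with h | h
      · have : 0 < α * ‖w‖ ^ 2 := mul_pos hα (pow_pos (norm_pos_iff.mpr hw0) 2)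
        linarith
      · linarith
    by_cases hdep : ∃ c : ℝ, v = c • w
    · obtain ⟨c, rfl⟩ := hdep
      have : S (c • w) = c ^ 2 * S w := by
        simp [hS, map_smul]; ring
      nlinarith [sq_nonneg c]
    · -- IVT on the segment from w to v
      set g : ℝ → ℝ := fun t => S (t • v + (1 - t) • w) with hg
      have hgc : Continuous g := by
        apply hScont.comp
        continuity
      have h01 : (0:ℝ) ≤ 1 := zero_le_one
      have hmem : (0:ℝ) ∈ Set.Icc (g 1) (g 0) := by
        constructor
        · simp only [hg]; norm_num; linarith
        · simp only [hg]; norm_num; linarith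
      obtain ⟨t, _, hgt⟩ := intermediate_value_Icc' h01 hgc.continuousOn hmem
      set u : V := t • v + (1 - t) • w with hu
      have hune : u ≠ 0 := by
        intro h0
        by_cases ht : t = 0
        · rw [hu, ht] at h0; simp at h0; exact hw0 h0
        · apply hdep
          have : t • v = -((1 - t) • w) := by
            rw [hu] at h0
            linear_combination (norm := module) h0
          refine ⟨-(1 - t) / t, ?_⟩
          have h2 := congrArg (fun x => t⁻¹ • x) this
          simp only [smul_smul, inv_mul_cancel₀ ht, one_smul] at h2
          rw [h2, smul_neg, smul_smul, ← neg_smul]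
          congr 1
          field_simp
      have : α * ‖u‖ ^ 2 ≤ |S u| := hcoer u
      rw [show S u = g t from rfl, hgt] at this
      simp only [abs_zero] at this
      have : 0 < α * ‖u‖ ^ 2 := by
        have := norm_pos_iff.mpr hune
        positivity
      linarith
  -- the bilinear form B u w = a u (T w)
  set B : V →L[ℝ] V →L[ℝ] ℝ := (a.flip.comp (T : V →L[ℝ] V)).flip with hB
  have hBapp : ∀ u w : V, B u w = a u (T w) := by
    intro u w
    simp [hB]
  have hTsurj : ∀ v : V, ∃ w : V, T w = v := fun v => ⟨T.symm v, T.apply_symm_apply v⟩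
  -- existence
  have hexists : ∃ u : V, ∀ v : V, a u v = f v := by
    rcases hsign with hpos | hneg
    · have hco : IsCoercive B := by
        refine ⟨α, hα, fun u => ?_⟩
        have := hpos u
        rw [hBapp]
        calc α * ‖u‖ * ‖u‖ = α * ‖u‖ ^ 2 := by ring
          _ ≤ S u := this
          _ = a u (T u) := rfl
      obtain ⟨u, hu⟩ := tcoer_aux_exists B hco (f.comp (T : V →L[ℝ] V))
      refine ⟨u, fun v => ?_⟩
      obtain ⟨w, rfl⟩ := hTsurj v
      exact hu w
    · have hco : IsCoercive (-B) := by
        refine ⟨α, hα, fun u => ?_⟩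
        have := hneg u
        have : α * ‖u‖ * ‖u‖ ≤ -(a u (T u)) := by
          calc α * ‖u‖ * ‖u‖ = α * ‖u‖ ^ 2 := by ring
            _ ≤ -S u := this
            _ = -(a u (T u)) := rfl
        simpa [hBapp] using this
      obtain ⟨u, hu⟩ := tcoer_aux_exists (-B) hco (-(f.comp (T : V →L[ℝ] V)))
      refine ⟨u, fun v => ?_⟩
      obtain ⟨w, rfl⟩ := hTsurj v
      have := hu w
      simp only [ContinuousLinearMap.neg_apply, ContinuousLinearMap.comp_apply,
        neg_inj] at this
      exact this
  obtain ⟨u, hu⟩ := hexists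
  refine ⟨u, hu, fun u' hu' => ?_⟩
  -- uniqueness
  have hzero : ∀ v : V, a (u' - u) v = 0 := by
    intro v
    simp [map_sub, hu v, hu' v]
  have := hcoer (u' - u)
  rw [hzero (T (u' - u))] at this
  simp only [abs_zero] at this
  have hn : ‖u' - u‖ ^ 2 ≤ 0 := by nlinarith
  have : u' - u = 0 := by
    have : ‖u' - u‖ = 0 := by nlinarith [norm_nonneg (u' - u), sq_nonneg ‖u' - u‖]
    exact norm_eq_zero.mp this
  exact sub_eq_zero.mp this
end

section
/- Let V be a real Hilbert space, let a : V × V → ℝ be a bilinear form, let T : V → V be an injective continuous linear operator with operator norm ‖T‖ > 0, and let α > 0 be such that a(v, T v) ≥ α‖v‖² for every v ∈ V. Then for every v ∈ V with v ≠ 0 there exists w ∈ V with w ≠ 0 such that a(v, w) ≥ (α/‖T‖)·‖v‖·‖w‖; that is, the inf-sup constant of a is at least α/‖T‖. -/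
/-- T-coercivity yields the inf-sup condition with constant `α / ‖T‖`: taking `w = T v`
in the bilinear form `a` gives `a(v, w) ≥ (α/‖T‖) ‖v‖ ‖w‖` for any nonzero `v`. -/
theorem tcoercivity_infsup {V : Type*} [NormedAddCommGroup V] [InnerProductSpace ℝ V]
    (a : V →ₗ[ℝ] V →ₗ[ℝ] ℝ) (T : V →L[ℝ] V) (hTinj : Function.Injective T)
    (hTnorm : 0 < ‖T‖) (α : ℝ) (hα : 0 < α)
    (hcoer : ∀ v : V, α * ‖v‖ ^ 2 ≤ a v (T v)) :
    ∀ v : V, v ≠ 0 → ∃ w : V, w ≠ 0 ∧ (α / ‖T‖) * ‖v‖ * ‖w‖ ≤ a v w := by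
  intro v hv
  refine ⟨T v, fun h => hv (hTinj (by simpa using h)), ?_⟩
  have h1 : ‖T v‖ ≤ ‖T‖ * ‖v‖ := T.le_opNorm v
  have h2 : (α / ‖T‖) * ‖v‖ * ‖T v‖ ≤ α * ‖v‖ ^ 2 := by
    have : (α / ‖T‖) * ‖v‖ * ‖T v‖ ≤ (α / ‖T‖) * ‖v‖ * (‖T‖ * ‖v‖) := by
      apply mul_le_mul_of_nonneg_left h1
      positivity
    calc (α / ‖T‖) * ‖v‖ * ‖T v‖ ≤ (α / ‖T‖) * ‖v‖ * (‖T‖ * ‖v‖) := this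
      _ = α * ‖v‖ ^ 2 := by field_simp
  exact h2.trans (hcoer v)
end

section
/- Let d ≥ 1, let Ω⁺, Ω⁻ ⊆ ℝ^d be disjoint measurable sets, let σ : ℝ^d → ℝ be measurable, and let σ⁺min, σ⁻max > 0 satisfy σ(x) ≥ σ⁺min for a.e. x ∈ Ω⁺ and −σ⁻max ≤ σ(x) ≤ 0 for a.e. x ∈ Ω⁻. Let v, r : ℝ^d → ℝ be differentiable with gradients ∇v, ∇r, assume the functions |σ|‖∇v‖² and ‖∇v‖² are integrable on Ω⁺ ∪ Ω⁻ and |σ|‖∇r‖² and ‖∇r‖² are integrable on Ω⁻, and let M ≥ 0 satisfy ∫_{Ω⁻} ‖∇r(x)‖² dx ≤ M² ∫_{Ω⁺} ‖∇v(x)‖² dx. Then ∫_{Ω⁺} σ(x)‖∇v(x)‖² dx + ∫_{Ω⁻} σ(x) ⟨∇v(x), −∇v(x) + 2∇r(x)⟩ dx ≥ (1 − M·√(σ⁻max/σ⁺min)) · ( ∫_{Ω⁺} |σ(x)|‖∇v(x)‖² dx + ∫_{Ω⁻} |σ(x)|‖∇v(x)‖² dx ). -/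
open MeasureTheory

lemma young_aux {t a b : ℝ} (ht : 0 < t) : 2 * (a * b) ≤ t * a ^ 2 + (1/t) * b ^ 2 := by
  have htne : t ≠ 0 := ne_of_gt ht
  have e : t * (t * a ^ 2 + (1/t) * b ^ 2) = t ^ 2 * a ^ 2 + b ^ 2 := by
    field_simp
  have key2 : t * (2 * (a * b)) ≤ t * (t * a ^ 2 + (1/t) * b ^ 2) := by
    rw [e]; nlinarith [sq_nonneg (t * a - b)]
  exact le_of_mul_le_mul_left key2 ht

set_option maxHeartbeats 1000000

/-- T-coercivity lower bound for the sign-changing bilinear form: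
`a(v, T v) ≥ (1 − M √(σ⁻max/σ⁺min)) ‖v‖²_ã`, where `T v = v` on `Ω⁺` and
`T v = −v + 2 R v` on `Ω⁻`, and `M = ‖R‖₁` bounds the gradient of the flip `r = R v`. -/
theorem tcoercivity_sign_changing_lower_bound {d : ℕ} (hd : 1 ≤ d)
    (Ωp Ωm : Set (EuclideanSpace ℝ (Fin d)))
    (hdisj : Disjoint Ωp Ωm) (hΩp : MeasurableSet Ωp) (hΩm : MeasurableSet Ωm)
    (σ : EuclideanSpace ℝ (Fin d) → ℝ) (hσmeas : Measurable σ)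
    (σpmin σmmax : ℝ) (hσpmin : 0 < σpmin) (hσmmax : 0 < σmmax)
    (hσp : ∀ᵐ x ∂(volume.restrict Ωp), σpmin ≤ σ x)
    (hσm : ∀ᵐ x ∂(volume.restrict Ωm), -σmmax ≤ σ x ∧ σ x ≤ 0)
    (v r : EuclideanSpace ℝ (Fin d) → ℝ)
    (hv : Differentiable ℝ v) (hr : Differentiable ℝ r)
    (hint1 : IntegrableOn (fun x => |σ x| * ‖gradient v x‖ ^ 2) (Ωp ∪ Ωm))
    (hint2 : IntegrableOn (fun x => ‖gradient v x‖ ^ 2) (Ωp ∪ Ωm))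
    (hint3 : IntegrableOn (fun x => |σ x| * ‖gradient r x‖ ^ 2) Ωm)
    (hint4 : IntegrableOn (fun x => ‖gradient r x‖ ^ 2) Ωm)
    (M : ℝ) (hM : 0 ≤ M)
    (hR : (∫ x in Ωm, ‖gradient r x‖ ^ 2) ≤ M ^ 2 * ∫ x in Ωp, ‖gradient v x‖ ^ 2) :
    (1 - M * Real.sqrt (σmmax / σpmin)) *
        ((∫ x in Ωp, |σ x| * ‖gradient v x‖ ^ 2) +
          ∫ x in Ωm, |σ x| * ‖gradient v x‖ ^ 2) ≤
      (∫ x in Ωp, σ x * ‖gradient v x‖ ^ 2) +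
        ∫ x in Ωm, σ x * (inner ℝ (gradient v x) (-(gradient v x) + (2 : ℝ) • gradient r x) : ℝ) := by
  have hgv : Measurable (gradient v) :=
    ((InnerProductSpace.toDual ℝ (EuclideanSpace ℝ (Fin d))).symm.continuous.measurable).comp
      (measurable_fderiv ℝ v)
  have hgr : Measurable (gradient r) :=
    ((InnerProductSpace.toDual ℝ (EuclideanSpace ℝ (Fin d))).symm.continuous.measurable).comp
      (measurable_fderiv ℝ r)
  set A := ∫ x in Ωp, |σ x| * ‖gradient v x‖ ^ 2 with hA
  set B := ∫ x in Ωm, |σ x| * ‖gradient v x‖ ^ 2 with hB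
  set t := M * Real.sqrt (σmmax / σpmin) with ht
  -- integrability pieces on Ωm
  have hint1m : IntegrableOn (fun x => |σ x| * ‖gradient v x‖ ^ 2) Ωm :=
    hint1.mono_set Set.subset_union_right
  have hint1p : IntegrableOn (fun x => |σ x| * ‖gradient v x‖ ^ 2) Ωp :=
    hint1.mono_set Set.subset_union_left
  have hint2p : IntegrableOn (fun x => ‖gradient v x‖ ^ 2) Ωp :=
    hint2.mono_set Set.subset_union_left
  -- measurability of the inner product term
  have hinnermeas : Measurable fun x => σ x * (inner ℝ (gradient v x) (gradient r x) : ℝ) :=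
    hσmeas.mul (hgv.inner hgr)
  have hprodmeas : Measurable fun x => |σ x| * (‖gradient v x‖ * ‖gradient r x‖) :=
    hσmeas.abs.mul ((hgv.norm).mul (hgr.norm))
  -- pointwise bound |σ ⟪gv,gr⟫| ≤ |σ|‖gv‖‖gr‖ ≤ |σ|‖gv‖² + |σ|‖gr‖²
  have hptbound : ∀ x, |σ x * (inner ℝ (gradient v x) (gradient r x) : ℝ)| ≤
      |σ x| * ‖gradient v x‖ ^ 2 + |σ x| * ‖gradient r x‖ ^ 2 := by
    intro x
    have h1 : |(inner ℝ (gradient v x) (gradient r x) : ℝ)| ≤ ‖gradient v x‖ * ‖gradient r x‖ :=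
      abs_real_inner_le_norm _ _
    have h2 : ‖gradient v x‖ * ‖gradient r x‖ ≤ ‖gradient v x‖ ^ 2 + ‖gradient r x‖ ^ 2 := by
      nlinarith [sq_nonneg (‖gradient v x‖ - ‖gradient r x‖), norm_nonneg (gradient v x),
        norm_nonneg (gradient r x)]
    calc |σ x * (inner ℝ (gradient v x) (gradient r x) : ℝ)|
        = |σ x| * |(inner ℝ (gradient v x) (gradient r x) : ℝ)| := abs_mul _ _
      _ ≤ |σ x| * (‖gradient v x‖ ^ 2 + ‖gradient r x‖ ^ 2) := by
          exact mul_le_mul_of_nonneg_left (h1.trans h2) (abs_nonneg _)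
      _ = |σ x| * ‖gradient v x‖ ^ 2 + |σ x| * ‖gradient r x‖ ^ 2 := by ring
  have hIm : IntegrableOn (fun x => σ x * (inner ℝ (gradient v x) (gradient r x) : ℝ)) Ωm := by
    refine Integrable.mono (hint1m.add hint3) hinnermeas.aestronglyMeasurable ?_
    filter_upwards with x
    rw [Real.norm_eq_abs, Real.norm_eq_abs]
    exact (hptbound x).trans (le_abs_self _)
  have hprodint : IntegrableOn (fun x => |σ x| * (‖gradient v x‖ * ‖gradient r x‖)) Ωm := by
    refine Integrable.mono (hint1m.add hint3) hprodmeas.aestronglyMeasurable ?_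
    filter_upwards with x
    rw [Real.norm_eq_abs, Real.norm_eq_abs]
    have h2 : ‖gradient v x‖ * ‖gradient r x‖ ≤ ‖gradient v x‖ ^ 2 + ‖gradient r x‖ ^ 2 := by
      nlinarith [sq_nonneg (‖gradient v x‖ - ‖gradient r x‖), norm_nonneg (gradient v x),
        norm_nonneg (gradient r x)]
    have : |σ x| * (‖gradient v x‖ * ‖gradient r x‖) ≤
        |σ x| * ‖gradient v x‖ ^ 2 + |σ x| * ‖gradient r x‖ ^ 2 := by
      calc |σ x| * (‖gradient v x‖ * ‖gradient r x‖)
          ≤ |σ x| * (‖gradient v x‖ ^ 2 + ‖gradient r x‖ ^ 2) :=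
            mul_le_mul_of_nonneg_left h2 (abs_nonneg _)
        _ = _ := by ring
    have hnn : 0 ≤ |σ x| * (‖gradient v x‖ * ‖gradient r x‖) :=
      mul_nonneg (abs_nonneg _) (mul_nonneg (norm_nonneg _) (norm_nonneg _))
    rw [abs_of_nonneg hnn]
    exact this.trans (le_abs_self _)
  -- Ωp integral equality
  have hPeq : (∫ x in Ωp, σ x * ‖gradient v x‖ ^ 2) = A := by
    rw [hA]
    refine integral_congr_ae ?_
    filter_upwards [hσp] with x hx
    rw [abs_of_nonneg (le_trans hσpmin.le hx)]
  -- Ωm integral splitting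
  set I := ∫ x in Ωm, σ x * (inner ℝ (gradient v x) (gradient r x) : ℝ) with hI
  have hMeq : (∫ x in Ωm, σ x * (inner ℝ (gradient v x) (-(gradient v x) + (2:ℝ) • gradient r x) : ℝ))
      = B + 2 * I := by
    have hsplit : (∫ x in Ωm, σ x * (inner ℝ (gradient v x) (-(gradient v x) + (2:ℝ) • gradient r x) : ℝ))
        = ∫ x in Ωm, (|σ x| * ‖gradient v x‖ ^ 2 +
            2 * (σ x * (inner ℝ (gradient v x) (gradient r x) : ℝ))) := by
      refine integral_congr_ae ?_
      filter_upwards [hσm] with x hx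
      have habs : |σ x| = -σ x := abs_of_nonpos hx.2
      have hin : (inner ℝ (gradient v x) (-(gradient v x) + (2:ℝ) • gradient r x) : ℝ)
          = -‖gradient v x‖ ^ 2 + 2 * (inner ℝ (gradient v x) (gradient r x) : ℝ) := by
        rw [inner_add_right, inner_neg_right, real_inner_smul_right,
          real_inner_self_eq_norm_sq]
      rw [hin, habs]; ring
    rw [hsplit, integral_add hint1m (hIm.const_mul 2), integral_const_mul, hB]
  rw [hPeq, hMeq]
  -- reduces to: (1 - t) * (A + B) ≤ A + (B + 2 I), i.e. -(t*(A+B)) ≤ 2 I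
  have key : -(t * (A + B)) ≤ 2 * I := by
    rcases eq_or_lt_of_le hM with hM0 | hMpos
    · -- M = 0 : gradient r = 0 a.e. on Ωm, so I = 0
      have hDnn : 0 ≤ ∫ x in Ωm, ‖gradient r x‖ ^ 2 :=
        integral_nonneg fun x => sq_nonneg _
      have hD0 : (∫ x in Ωm, ‖gradient r x‖ ^ 2) = 0 := by
        have h0 : (∫ x in Ωm, ‖gradient r x‖ ^ 2) ≤ 0 := by
          have := hR; rw [← hM0] at this; simpa using this
        exact le_antisymm h0 hDnn
      have hr0 : ∀ᵐ x ∂(volume.restrict Ωm), ‖gradient r x‖ ^ 2 = 0 := by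
        have := (integral_eq_zero_iff_of_nonneg (fun x => sq_nonneg _) hint4).1 hD0
        filter_upwards [this] with x hx using hx
      have hI0 : I = 0 := by
        rw [hI]
        rw [integral_eq_zero_of_ae ?_]
        filter_upwards [hr0] with x hx
        have : gradient r x = 0 := by
          have := sq_eq_zero_iff.1 hx
          simpa using this
        simp [this]
      rw [hI0, ht, ← hM0]
      simp
    · have htpos : 0 < t := by
        rw [ht]
        exact mul_pos hMpos (Real.sqrt_pos.2 (div_pos hσmmax hσpmin))
      set J := ∫ x in Ωm, |σ x| * (‖gradient v x‖ * ‖gradient r x‖) with hJ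
      have hIJ : -J ≤ I := by
        have hsum : 0 ≤ ∫ x in Ωm, (|σ x| * (‖gradient v x‖ * ‖gradient r x‖) +
            σ x * (inner ℝ (gradient v x) (gradient r x) : ℝ)) := by
          refine integral_nonneg fun x => ?_
          show (0:ℝ) ≤ |σ x| * (‖gradient v x‖ * ‖gradient r x‖) +
            σ x * (inner ℝ (gradient v x) (gradient r x) : ℝ)
          have h1 : |(inner ℝ (gradient v x) (gradient r x) : ℝ)| ≤
              ‖gradient v x‖ * ‖gradient r x‖ := abs_real_inner_le_norm _ _
          have h2 : |σ x * (inner ℝ (gradient v x) (gradient r x) : ℝ)| ≤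
              |σ x| * (‖gradient v x‖ * ‖gradient r x‖) := by
            rw [abs_mul]
            exact mul_le_mul_of_nonneg_left h1 (abs_nonneg _)
          have h3 := neg_abs_le (σ x * (inner ℝ (gradient v x) (gradient r x) : ℝ))
          linarith
        rw [integral_add hprodint hIm] at hsum
        rw [hJ, hI]
        linarith
      -- Young: 2J ≤ t * B + (1/t) * C
      set C := ∫ x in Ωm, |σ x| * ‖gradient r x‖ ^ 2 with hC
      have hYoung : 2 * J ≤ t * B + (1/t) * C := by
        rw [hJ, hB, hC, ← integral_const_mul, ← integral_const_mul, ← integral_const_mul,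
          ← integral_add (hint1m.const_mul t) (hint3.const_mul (1/t))]
        refine integral_mono (hprodint.const_mul 2)
          ((hint1m.const_mul t).add (hint3.const_mul (1/t))) ?_
        intro x
        have hs : 0 ≤ |σ x| := abs_nonneg _
        have ha : 0 ≤ ‖gradient v x‖ := norm_nonneg _
        have hb : 0 ≤ ‖gradient r x‖ := norm_nonneg _
        have h2 : 2 * (‖gradient v x‖ * ‖gradient r x‖) ≤
            t * ‖gradient v x‖ ^ 2 + (1/t) * ‖gradient r x‖ ^ 2 := young_aux htpos
        calc (2:ℝ) * (|σ x| * (‖gradient v x‖ * ‖gradient r x‖))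
            = |σ x| * (2 * (‖gradient v x‖ * ‖gradient r x‖)) := by ring
          _ ≤ |σ x| * (t * ‖gradient v x‖ ^ 2 + (1/t) * ‖gradient r x‖ ^ 2) :=
              mul_le_mul_of_nonneg_left h2 hs
          _ = t * (|σ x| * ‖gradient v x‖ ^ 2) + (1/t) * (|σ x| * ‖gradient r x‖ ^ 2) := by ring
      -- C ≤ σmmax * ∫Ωm ‖gr‖² ≤ σmmax M² ∫Ωp ‖gv‖² ≤ σmmax M² A / σpmin
      have hC1 : C ≤ σmmax * ∫ x in Ωm, ‖gradient r x‖ ^ 2 := by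
        rw [hC, ← integral_const_mul]
        refine integral_mono_ae hint3 (hint4.const_mul _) ?_
        filter_upwards [hσm] with x hx
        have : |σ x| ≤ σmmax := by
          rw [abs_of_nonpos hx.2]; linarith [hx.1]
        exact mul_le_mul_of_nonneg_right this (sq_nonneg _)
      have hE : σpmin * (∫ x in Ωp, ‖gradient v x‖ ^ 2) ≤ A := by
        rw [hA, ← integral_const_mul]
        refine integral_mono_ae (hint2p.const_mul _) hint1p ?_
        filter_upwards [hσp] with x hx
        have : σpmin ≤ |σ x| := hx.trans_eq (abs_of_nonneg (hσpmin.le.trans hx)).symm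
        exact mul_le_mul_of_nonneg_right this (sq_nonneg _)
      have hEnn : 0 ≤ ∫ x in Ωp, ‖gradient v x‖ ^ 2 := integral_nonneg fun x => sq_nonneg _
      have hC2 : C ≤ σmmax * M ^ 2 * (A / σpmin) := by
        have h1 : C ≤ σmmax * (M ^ 2 * ∫ x in Ωp, ‖gradient v x‖ ^ 2) :=
          hC1.trans (mul_le_mul_of_nonneg_left hR hσmmax.le)
        have h2 : (∫ x in Ωp, ‖gradient v x‖ ^ 2) ≤ A / σpmin := by
          rw [le_div_iff₀ hσpmin]; linarith [hE]
        calc C ≤ σmmax * (M ^ 2 * ∫ x in Ωp, ‖gradient v x‖ ^ 2) := h1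
          _ ≤ σmmax * (M ^ 2 * (A / σpmin)) := by
              refine mul_le_mul_of_nonneg_left ?_ hσmmax.le
              exact mul_le_mul_of_nonneg_left h2 (sq_nonneg M)
          _ = σmmax * M ^ 2 * (A / σpmin) := by ring
      have ht2 : t ^ 2 = M ^ 2 * (σmmax / σpmin) := by
        rw [ht, mul_pow, Real.sq_sqrt (div_nonneg hσmmax.le hσpmin.le)]
      have hfin : (1/t) * C ≤ t * A := by
        have hAnn : 0 ≤ A := by
          rw [hA]; exact integral_nonneg fun x => mul_nonneg (abs_nonneg _) (sq_nonneg _)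
        have : (1/t) * C ≤ (1/t) * (σmmax * M ^ 2 * (A / σpmin)) :=
          mul_le_mul_of_nonneg_left hC2 (by positivity)
        have h3 : σmmax * M ^ 2 * (A / σpmin) = t ^ 2 * A := by
          rw [ht2]; ring
        have heq : (1/t) * (t ^ 2 * A) = t * A := by
          have htne : t ≠ 0 := ne_of_gt htpos
          field_simp
        rw [h3, heq] at this
        exact this
      have h2J : 2 * J ≤ t * (A + B) := by linarith [hYoung, hfin]
      linarith [hIJ, h2J]
  linarith [key]
end

section
/- Let d ≥ 1, let Ω⁺, Ω⁻ ⊆ ℝ^d be disjoint measurable sets, let σ : ℝ^d → ℝ be measurable, and let σ⁺min, σ⁻max > 0 satisfy σ(x) ≥ σ⁺min for a.e. x ∈ Ω⁺ and −σ⁻max ≤ σ(x) ≤ 0 for a.e. x ∈ Ω⁻. Let v, r : ℝ^d → ℝ be differentiable with gradients ∇v, ∇r, assume the functions |σ|‖∇v‖² and ‖∇v‖² are integrable on Ω⁺ ∪ Ω⁻ and |σ|‖∇r‖² and ‖∇r‖² are integrable on Ω⁻, and let M ≥ 0 satisfy ∫_{Ω⁻} ‖∇r(x)‖² dx ≤ M²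 ∫_{Ω⁺} ‖∇v(x)‖² dx. Then ∫_{Ω⁺} |σ(x)|‖∇v(x)‖² dx + ∫_{Ω⁻} |σ(x)|‖−∇v(x) + 2∇r(x)‖² dx ≤ max{1 + 8M²·σ⁻max/σ⁺min, 2} · ( ∫_{Ω⁺} |σ(x)|‖∇v(x)‖² dx + ∫_{Ω⁻} |σ(x)|‖∇v(x)‖² dx ). -/
open MeasureTheory

/-- Energy-norm continuity bound for the T-coercivity operator

`‖T v‖²_ã ≤ max{1 + 8 M² σ⁻max/σ⁺min, 2} ‖v‖²_ã`,

where `T v = v` on `Ω⁺` and `T v = −v + 2 R v` on `Ω⁻`, and `M = ‖R‖₁` bounds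
the gradient of the flip `r = R v`. -/
theorem tcoercivity_sign_changing_energy_bound {d : ℕ} (hd : 1 ≤ d)
    (Ωp Ωm : Set (EuclideanSpace ℝ (Fin d)))
    (hdisj : Disjoint Ωp Ωm) (hΩp : MeasurableSet Ωp) (hΩm : MeasurableSet Ωm)
    (σ : EuclideanSpace ℝ (Fin d) → ℝ) (hσmeas : Measurable σ)
    (σpmin σmmax : ℝ) (hσpmin : 0 < σpmin) (hσmmax : 0 < σmmax)
    (hσp : ∀ᵐ x ∂(volume.restrict Ωp), σpmin ≤ σ x)
    (hσm : ∀ᵐ x ∂(volume.restrict Ωm), -σmmax ≤ σ x ∧ σ x ≤ 0)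
    (v r : EuclideanSpace ℝ (Fin d) → ℝ)
    (hv : Differentiable ℝ v) (hr : Differentiable ℝ r)
    (hint1 : IntegrableOn (fun x => |σ x| * ‖gradient v x‖ ^ 2) (Ωp ∪ Ωm))
    (hint2 : IntegrableOn (fun x => ‖gradient v x‖ ^ 2) (Ωp ∪ Ωm))
    (hint3 : IntegrableOn (fun x => |σ x| * ‖gradient r x‖ ^ 2) Ωm)
    (hint4 : IntegrableOn (fun x => ‖gradient r x‖ ^ 2) Ωm)
    (M : ℝ) (hM : 0 ≤ M)
    (hR : (∫ x in Ωm, ‖gradient r x‖ ^ 2) ≤ M ^ 2 * ∫ x in Ωp, ‖gradient v x‖ ^ 2) :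
    (∫ x in Ωp, |σ x| * ‖gradient v x‖ ^ 2) +
        (∫ x in Ωm, |σ x| * ‖-(gradient v x) + (2 : ℝ) • gradient r x‖ ^ 2) ≤
      max (1 + 8 * M ^ 2 * σmmax / σpmin) 2 *
        ((∫ x in Ωp, |σ x| * ‖gradient v x‖ ^ 2) +
          ∫ x in Ωm, |σ x| * ‖gradient v x‖ ^ 2) := by

  set A := ∫ x in Ωp, |σ x| * ‖gradient v x‖ ^ 2 with hAdef
  set B := ∫ x in Ωm, |σ x| * ‖gradient v x‖ ^ 2 with hBdef
  have hintpv : IntegrableOn (fun x => |σ x| * ‖gradient v x‖ ^ 2) Ωp :=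
    hint1.mono_set Set.subset_union_left
  have hintmv : IntegrableOn (fun x => |σ x| * ‖gradient v x‖ ^ 2) Ωm :=
    hint1.mono_set Set.subset_union_right
  have hintpv2 : IntegrableOn (fun x => ‖gradient v x‖ ^ 2) Ωp :=
    hint2.mono_set Set.subset_union_left
  have hA0 : 0 ≤ A := setIntegral_nonneg hΩp (fun x _ => by positivity)
  have hB0 : 0 ≤ B := setIntegral_nonneg hΩm (fun x _ => by positivity)
  have hIp0 : 0 ≤ ∫ x in Ωp, ‖gradient v x‖ ^ 2 :=
    setIntegral_nonneg hΩp (fun x _ => by positivity)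
  -- measurability of gradients
  have hmgv : Measurable (gradient v) := by
    have h := measurable_fderiv ℝ v
    exact ((InnerProductSpace.toDual ℝ
      (EuclideanSpace ℝ (Fin d))).symm.continuous.measurable).comp h
  have hmgr : Measurable (gradient r) := by
    have h := measurable_fderiv ℝ r
    exact ((InnerProductSpace.toDual ℝ
      (EuclideanSpace ℝ (Fin d))).symm.continuous.measurable).comp h
  -- pointwise bound for the T term
  have hbound : ∀ x, |σ x| * ‖-(gradient v x) + (2 : ℝ) • gradient r x‖ ^ 2
      ≤ 2 * (|σ x| * ‖gradient v x‖ ^ 2) + 8 * (|σ x| * ‖gradient r x‖ ^ 2) := by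
    intro x
    have h1 : ‖-(gradient v x) + (2 : ℝ) • gradient r x‖
        ≤ ‖gradient v x‖ + 2 * ‖gradient r x‖ := by
      calc ‖-(gradient v x) + (2 : ℝ) • gradient r x‖
          ≤ ‖-(gradient v x)‖ + ‖(2 : ℝ) • gradient r x‖ := norm_add_le _ _
        _ = ‖gradient v x‖ + 2 * ‖gradient r x‖ := by
            rw [norm_neg, norm_smul]; simp
    have h2 : ‖-(gradient v x) + (2 : ℝ) • gradient r x‖ ^ 2
        ≤ 2 * ‖gradient v x‖ ^ 2 + 8 * ‖gradient r x‖ ^ 2 := by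
      nlinarith [h1, norm_nonneg (-(gradient v x) + (2 : ℝ) • gradient r x),
        sq_nonneg (‖gradient v x‖ - 2 * ‖gradient r x‖),
        norm_nonneg (gradient v x), norm_nonneg (gradient r x)]
    calc |σ x| * ‖-(gradient v x) + (2 : ℝ) • gradient r x‖ ^ 2
        ≤ |σ x| * (2 * ‖gradient v x‖ ^ 2 + 8 * ‖gradient r x‖ ^ 2) :=
          mul_le_mul_of_nonneg_left h2 (abs_nonneg _)
      _ = 2 * (|σ x| * ‖gradient v x‖ ^ 2) + 8 * (|σ x| * ‖gradient r x‖ ^ 2) := by ring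
  have hgint : IntegrableOn
      (fun x => 2 * (|σ x| * ‖gradient v x‖ ^ 2) + 8 * (|σ x| * ‖gradient r x‖ ^ 2)) Ωm :=
    (hintmv.const_mul 2).add (hint3.const_mul 8)
  have hmeasT : AEStronglyMeasurable
      (fun x => |σ x| * ‖-(gradient v x) + (2 : ℝ) • gradient r x‖ ^ 2)
      (volume.restrict Ωm) := by
    apply Measurable.aestronglyMeasurable
    exact hσmeas.abs.mul (((hmgv.neg.add (hmgr.const_smul (2 : ℝ))).norm).pow_const 2)
  have hfint : IntegrableOn
      (fun x => |σ x| * ‖-(gradient v x) + (2 : ℝ) • gradient r x‖ ^ 2) Ωm := by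
    apply hgint.mono' hmeasT
    refine ae_of_all _ fun x => ?_
    rw [Real.norm_eq_abs, abs_of_nonneg (by positivity)]
    exact hbound x
  have key1 : (∫ x in Ωm, |σ x| * ‖-(gradient v x) + (2 : ℝ) • gradient r x‖ ^ 2)
      ≤ 2 * B + 8 * ∫ x in Ωm, |σ x| * ‖gradient r x‖ ^ 2 := by
    have h := integral_mono_ae hfint hgint (ae_of_all _ hbound)
    rwa [integral_add (hintmv.const_mul 2) (hint3.const_mul 8),
      integral_const_mul _ _, integral_const_mul _ _] at h
  have key2 : (∫ x in Ωm, |σ x| * ‖gradient r x‖ ^ 2)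
      ≤ σmmax * ∫ x in Ωm, ‖gradient r x‖ ^ 2 := by
    have h := integral_mono_ae hint3 (hint4.const_mul σmmax) ?_
    · rwa [integral_const_mul _ _] at h
    · filter_upwards [hσm] with x hx
      have habs : |σ x| ≤ σmmax := abs_le.mpr ⟨hx.1, hx.2.trans hσmmax.le⟩
      exact mul_le_mul_of_nonneg_right habs (by positivity)
  have key3 : σpmin * (∫ x in Ωp, ‖gradient v x‖ ^ 2) ≤ A := by
    have h := integral_mono_ae (hintpv2.const_mul σpmin) hintpv ?_
    · rwa [integral_const_mul _ _] at h
    · filter_upwards [hσp] with x hx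
      exact mul_le_mul_of_nonneg_right (hx.trans (le_abs_self _)) (by positivity)
  have key4 : (∫ x in Ωm, |σ x| * ‖gradient r x‖ ^ 2)
      ≤ σmmax * (M ^ 2 * ∫ x in Ωp, ‖gradient v x‖ ^ 2) :=
    key2.trans (mul_le_mul_of_nonneg_left hR hσmmax.le)
  have hmax1 : 1 + 8 * M ^ 2 * σmmax / σpmin ≤ max (1 + 8 * M ^ 2 * σmmax / σpmin) 2 :=
    le_max_left _ _
  have hmax2 : (2 : ℝ) ≤ max (1 + 8 * M ^ 2 * σmmax / σpmin) 2 := le_max_right _ _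
  have hIp : (∫ x in Ωp, ‖gradient v x‖ ^ 2) ≤ A / σpmin := by
    rw [le_div_iff₀ hσpmin]
    linarith [key3]
  have step : (∫ x in Ωm, |σ x| * ‖-(gradient v x) + (2 : ℝ) • gradient r x‖ ^ 2)
      ≤ 2 * B + 8 * (σmmax * (M ^ 2 * (A / σpmin))) := by
    have h5 : σmmax * (M ^ 2 * ∫ x in Ωp, ‖gradient v x‖ ^ 2)
        ≤ σmmax * (M ^ 2 * (A / σpmin)) := by
      apply mul_le_mul_of_nonneg_left _ hσmmax.le
      exact mul_le_mul_of_nonneg_left hIp (by positivity)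
    linarith [key1, key4]
  have hco : 8 * (σmmax * (M ^ 2 * (A / σpmin))) = (8 * M ^ 2 * σmmax / σpmin) * A := by
    field_simp
  rw [hco] at step
  nlinarith [mul_le_mul_of_nonneg_right hmax1 hA0, mul_le_mul_of_nonneg_right hmax2 hB0]
end

section
/- Let d ≥ 1, let Ω⁺, Ω⁻ ⊆ ℝ^d be disjoint measurable sets, let μ : ℝ^d → ℝ be measurable, and let μ⁺min, μ⁻max > 0 satisfy μ(x) ≥ μ⁺min for a.e. x ∈ Ω⁺ and −μ⁻max ≤ μ(x) ≤ 0 for a.e. x ∈ Ω⁻. Let v, r : ℝ^d → ℝ be measurable, assume |μ|v² and v² are integrable on Ω⁺ ∪ Ω⁻ and |μ|r² and r² are integrable on Ω⁻, and let M₀ ≥ 0 satisfy ∫_{Ω⁻} r(x)² dx ≤ M₀² ∫_{Ω⁺} v(x)² dx. Then ∫_{Ω⁺} |μ(x)| v(x)² dx + ∫_{Ω⁻} |μ(x)| (−v(x) + 2r(x))² dx ≤ max{1 + 8M₀²·μ⁻max/μ⁺min, 2} · ( ∫_{Ω⁺} |μ(x)| v(x)² dx + ∫_{Ω⁻} |μ(x)|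 v(x)² dx ). -/
open MeasureTheory

/-- Weighted-`L²` continuity bound for the T-coercivity operator

`‖T v‖²_s̃ ≤ max{1 + 8 M₀² μ⁻max/μ⁺min, 2} ‖v‖²_s̃`,

where `T v = v` on `Ω⁺` and `T v = −v + 2 R v` on `Ω⁻`, and `M₀ = ‖R‖₀` is the
`L²`-bound of the flip `r = R v`. -/
theorem tcoercivity_sign_changing_weighted_L2_bound {d : ℕ} (hd : 1 ≤ d)
    (Ωp Ωm : Set (EuclideanSpace ℝ (Fin d)))
    (hdisj : Disjoint Ωp Ωm) (hΩp : MeasurableSet Ωp) (hΩm : MeasurableSet Ωm)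
    (μ : EuclideanSpace ℝ (Fin d) → ℝ) (hμmeas : Measurable μ)
    (μpmin μmmax : ℝ) (hμpmin : 0 < μpmin) (hμmmax : 0 < μmmax)
    (hμp : ∀ᵐ x ∂(volume.restrict Ωp), μpmin ≤ μ x)
    (hμm : ∀ᵐ x ∂(volume.restrict Ωm), -μmmax ≤ μ x ∧ μ x ≤ 0)
    (v r : EuclideanSpace ℝ (Fin d) → ℝ)
    (hv : Measurable v) (hr : Measurable r)
    (hint1 : IntegrableOn (fun x => |μ x| * (v x) ^ 2) (Ωp ∪ Ωm))
    (hint2 : IntegrableOn (fun x => (v x) ^ 2) (Ωp ∪ Ωm))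
    (hint3 : IntegrableOn (fun x => |μ x| * (r x) ^ 2) Ωm)
    (hint4 : IntegrableOn (fun x => (r x) ^ 2) Ωm)
    (M₀ : ℝ) (hM₀ : 0 ≤ M₀)
    (hR : (∫ x in Ωm, (r x) ^ 2) ≤ M₀ ^ 2 * ∫ x in Ωp, (v x) ^ 2) :
    (∫ x in Ωp, |μ x| * (v x) ^ 2) +
        (∫ x in Ωm, |μ x| * (-(v x) + 2 * r x) ^ 2) ≤
      max (1 + 8 * M₀ ^ 2 * μmmax / μpmin) 2 *
        ((∫ x in Ωp, |μ x| * (v x) ^ 2) + ∫ x in Ωm, |μ x| * (v x) ^ 2) := by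
  set A := ∫ x in Ωp, |μ x| * (v x) ^ 2 with hAdef
  set B := ∫ x in Ωm, |μ x| * (v x) ^ 2 with hBdef
  have hAint : IntegrableOn (fun x => |μ x| * (v x) ^ 2) Ωp :=
    hint1.mono_set Set.subset_union_left
  have hBint : IntegrableOn (fun x => |μ x| * (v x) ^ 2) Ωm :=
    hint1.mono_set Set.subset_union_right
  have hA0 : 0 ≤ A := setIntegral_nonneg hΩp (fun x _ => by positivity)
  have hB0 : 0 ≤ B := setIntegral_nonneg hΩm (fun x _ => by positivity)
  set C := ∫ x in Ωm, |μ x| * (r x) ^ 2 with hCdef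
  set Vp := ∫ x in Ωp, (v x) ^ 2 with hVpdef
  -- Step 1: ∫m |μ|(−v+2r)² ≤ 2B + 8C
  have h1 : (∫ x in Ωm, |μ x| * (-(v x) + 2 * r x) ^ 2) ≤ 2 * B + 8 * C := by
    have hg : IntegrableOn
        (fun x => 2 * (|μ x| * (v x) ^ 2) + 8 * (|μ x| * (r x) ^ 2)) Ωm :=
      (hBint.const_mul 2).add (hint3.const_mul 8)
    have hmono := integral_mono_of_nonneg
      (f := fun x => |μ x| * (-(v x) + 2 * r x) ^ 2)
      (g := fun x => 2 * (|μ x| * (v x) ^ 2) + 8 * (|μ x| * (r x) ^ 2))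
      (μ := volume.restrict Ωm)
      (Filter.Eventually.of_forall fun x => by positivity) hg
      (Filter.Eventually.of_forall fun x => by
        show |μ x| * (-(v x) + 2 * r x) ^ 2
            ≤ 2 * (|μ x| * (v x) ^ 2) + 8 * (|μ x| * (r x) ^ 2)
        nlinarith [mul_nonneg (abs_nonneg (μ x)) (sq_nonneg (v x + 2 * r x))])
    calc (∫ x in Ωm, |μ x| * (-(v x) + 2 * r x) ^ 2)
        ≤ ∫ x in Ωm, (2 * (|μ x| * (v x) ^ 2) + 8 * (|μ x| * (r x) ^ 2)) := hmono
      _ = 2 * B + 8 * C := by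
          rw [integral_add (hBint.const_mul 2) (hint3.const_mul 8),
            integral_const_mul, integral_const_mul]
  -- Step 2: C ≤ μmmax * ∫m r²
  have h2 : C ≤ μmmax * ∫ x in Ωm, (r x) ^ 2 := by
    have hmono := integral_mono_of_nonneg
      (f := fun x => |μ x| * (r x) ^ 2)
      (g := fun x => μmmax * (r x) ^ 2)
      (μ := volume.restrict Ωm)
      (Filter.Eventually.of_forall fun x => by positivity)
      (hint4.const_mul μmmax)
      (hμm.mono fun x hx => by
        have habs : |μ x| ≤ μmmax := abs_le.mpr ⟨hx.1, hx.2.trans hμmmax.le⟩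
        exact mul_le_mul_of_nonneg_right habs (sq_nonneg _))
    calc C ≤ ∫ x in Ωm, μmmax * (r x) ^ 2 := hmono
      _ = μmmax * ∫ x in Ωm, (r x) ^ 2 := integral_const_mul _ _
  -- Step 3: μpmin * Vp ≤ A
  have h3 : μpmin * Vp ≤ A := by
    have hmono := integral_mono_of_nonneg
      (f := fun x => μpmin * (v x) ^ 2)
      (g := fun x => |μ x| * (v x) ^ 2)
      (μ := volume.restrict Ωp)
      (Filter.Eventually.of_forall fun x => by positivity) hAint
      (hμp.mono fun x hx => by
        have : μpmin ≤ |μ x| := hx.trans (le_abs_self _)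
        exact mul_le_mul_of_nonneg_right this (sq_nonneg _))
    calc μpmin * Vp = ∫ x in Ωp, μpmin * (v x) ^ 2 := (integral_const_mul _ _).symm
      _ ≤ A := hmono
  -- Combine
  have h4 : C ≤ μmmax * (M₀ ^ 2 * Vp) :=
    h2.trans (mul_le_mul_of_nonneg_left hR hμmmax.le)
  set K := max (1 + 8 * M₀ ^ 2 * μmmax / μpmin) 2 with hKdef
  have hK1 : 1 + 8 * M₀ ^ 2 * μmmax / μpmin ≤ K := le_max_left _ _
  have hK2 : (2 : ℝ) ≤ K := le_max_right _ _
  have hVp0 : 0 ≤ Vp := setIntegral_nonneg hΩp (fun x _ => by positivity)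
  have key : 8 * C ≤ 8 * M₀ ^ 2 * μmmax / μpmin * A := by
    have h5 : 8 * C ≤ 8 * μmmax * M₀ ^ 2 * Vp := by nlinarith
    have h6 : 8 * μmmax * M₀ ^ 2 * Vp ≤ 8 * M₀ ^ 2 * μmmax / μpmin * A := by
      rw [div_mul_eq_mul_div, le_div_iff₀ hμpmin]
      nlinarith [mul_le_mul_of_nonneg_left h3 (by positivity : (0:ℝ) ≤ 8 * μmmax * M₀ ^ 2)]
    linarith
  nlinarith [mul_le_mul_of_nonneg_right hK1 hA0, mul_le_mul_of_nonneg_right hK2 hB0]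
end
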